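/- arXiv:2112.12173 — 4 statements merged into one kernel-verified Lean document; each statement's English description precedes it below -/
import Mathlib

section
/- Let H = (V, E) be a hypergraph such that (i) every hyperedge intersects at most Γ other hyperedges, and (ii) for every hyperedge E ∈ E, r ≤ |E| ≤ c·r, where c ≥ 1 is an integer and r = max(2^12, ⌈136·ln(16Γ)⌉). Then H has a conflict-free coloring using at most 32·c·r colors, i.e., χ_CF(H) ≤ 32cr. -/
/-!
Colour the vertices uniformly at random with `N = 32cr` colours. If an edge `E` has no vertex
of unique colour, every colour on `E` occurs at least twice, so `E` uses at most `|E|/2` colours;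
hence this happens with probability at most `C(N, |E|/2) (|E|/2)^|E| / N^|E| ≤ 4^(-|E|)`, which is
at most `1 / (4(Γ + 1))` because `r ≥ log(16Γ)`. This event is determined by the colours on `E`,
so it is independent of any combination of the events of edges disjoint from `E`, and each edge
meets at most `Γ` others. The symmetric Lovász local lemma, in its counting form for the uniform
measure on a finite space, then yields a colouring avoiding all these events.
-/

def IsCFHypergraphColoring {V α : Type} (H : Finset (Finset V)) (c : V → α) : Prop :=
  ∀ E ∈ H, ∃ v ∈ E, ∀ u ∈ E, u ≠ v → c u ≠ c v

open Finset Nat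

section LocalLemma

variable {Ω ι : Type*} [Fintype Ω] [DecidableEq Ω]

def avoidSet (A : ι → Finset Ω) (S : Finset ι) : Finset Ω := {ω | ∀ j ∈ S, ω ∉ A j}

variable {A : ι → Finset Ω}

@[simp]
lemma mem_avoidSet {S : Finset ι} {ω : Ω} : ω ∈ avoidSet A S ↔ ∀ j ∈ S, ω ∉ A j := by
  simp [avoidSet]

@[simp]
lemma avoidSet_empty : avoidSet A ∅ = univ := by
  ext; simp

lemma avoidSet_insert [DecidableEq ι] (a : ι) (S : Finset ι) :
    avoidSet A (insert a S) = avoidSet A S \ A a := by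
  ext; simp [and_comm]

lemma avoidSet_anti {S T : Finset ι} (h : S ⊆ T) : avoidSet A T ⊆ avoidSet A S :=
  fun _ hω ↦ mem_avoidSet.2 fun j hj ↦ mem_avoidSet.1 hω j (h hj)

lemma card_avoidSet_le_add_sum [DecidableEq ι] (S T : Finset ι) :
    #(avoidSet A T) ≤ #(avoidSet A S) + ∑ j ∈ S \ T, #(A j ∩ avoidSet A T) := by
  refine (card_le_card fun ω hω ↦ ?_).trans ((card_union_le _ _).trans
    (Nat.add_le_add_left card_biUnion_le _))
  by_cases hωS : ω ∈ avoidSet A S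
  · exact mem_union_left _ hωS
  obtain ⟨j, hjS, hωj⟩ : ∃ j ∈ S, ω ∈ A j := by simpa using hωS
  have hjT : j ∉ T := fun hjT ↦ mem_avoidSet.1 hω j hjT hωj
  exact mem_union_right _
    (mem_biUnion.2 ⟨j, mem_sdiff.2 ⟨hjS, hjT⟩, mem_inter.2 ⟨hωj, hω⟩⟩)

variable [Nonempty Ω] [DecidableEq ι] {H : Finset ι} {adj : ι → ι → Prop}
  [DecidableRel adj] {Γ : ℕ}

/-- In probabilistic terms: `P(A i | no A j with j ∈ S) ≤ 1 / (2 (Γ + 1))`. -/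
lemma card_inter_avoidSet_mul_le
    (hdeg : ∀ i ∈ H, #{j ∈ H | j ≠ i ∧ adj i j} ≤ Γ)
    (hindep : ∀ i ∈ H, ∀ S ⊆ H, (∀ j ∈ S, j ≠ i ∧ ¬adj i j) →
      #(A i ∩ avoidSet A S) * Fintype.card Ω = #(A i) * #(avoidSet A S))
    (hprob : ∀ i ∈ H, #(A i) * (4 * (Γ + 1)) ≤ Fintype.card Ω)
    {S : Finset ι} (hSH : S ⊆ H) {i : ι} (hiH : i ∈ H) (hiS : i ∉ S) :
    #(A i ∩ avoidSet A S) * (2 * (Γ + 1)) ≤ #(avoidSet A S) := by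
  induction S using Finset.strongInduction generalizing i with
  | H S ih =>
  set far := {j ∈ S | ¬adj i j}
  have hfarS : far ⊆ S := filter_subset _ _
  have hnear : ∀ j ∈ S \ far, j ∈ S ∧ adj i j := fun j hj ↦ by
    simp only [far, mem_sdiff, mem_filter, not_and, not_not] at hj
    exact ⟨hj.1, hj.2 hj.1⟩
  have hnear_card : #(S \ far) ≤ Γ := by
    refine (card_le_card fun j hj ↦ ?_).trans (hdeg i hiH)
    obtain ⟨hjS, hadj⟩ := hnear j hj
    exact mem_filter.2 ⟨hSH hjS, fun hji ↦ hiS (hji ▸ hjS), hadj⟩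
  have hfar : #(A i ∩ avoidSet A far) * (4 * (Γ + 1)) ≤ #(avoidSet A far) := by
    refine Nat.le_of_mul_le_mul_right ?_ (Fintype.card_pos (α := Ω))
    calc #(A i ∩ avoidSet A far) * (4 * (Γ + 1)) * Fintype.card Ω
        = #(A i) * (4 * (Γ + 1)) * #(avoidSet A far) := by
          rw [mul_right_comm, hindep i hiH far (hfarS.trans hSH) fun j hj ↦
            ⟨fun hji ↦ hiS (hji ▸ hfarS hj), (mem_filter.1 hj).2⟩, mul_right_comm]
      _ ≤ Fintype.card Ω * #(avoidSet A far) := Nat.mul_le_mul_right _ (hprob i hiH)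
      _ = #(avoidSet A far) * Fintype.card Ω := mul_comm _ _
  have hnear_le : ∀ j ∈ S \ far,
      #(A j ∩ avoidSet A far) * (2 * (Γ + 1)) ≤ #(avoidSet A far) := fun j hj ↦
    ih far (filter_ssubset.2 ⟨j, (hnear j hj).1, not_not.2 (hnear j hj).2⟩) (hfarS.trans hSH)
      (hSH (hnear j hj).1) (mem_sdiff.1 hj).2
  have hunion := card_avoidSet_le_add_sum (A := A) S far
  have hmono : #(A i ∩ avoidSet A S) ≤ #(A i ∩ avoidSet A far) :=
    card_le_card (inter_subset_inter_left (avoidSet_anti hfarS))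
  have hsum : (∑ j ∈ S \ far, #(A j ∩ avoidSet A far)) * (2 * (Γ + 1)) ≤
      Γ * #(avoidSet A far) := by
    rw [sum_mul]
    exact (sum_le_card_nsmul _ _ _ hnear_le).trans (by rw [smul_eq_mul]; gcongr)
  have hfar_le : (Γ + 2) * #(avoidSet A far) ≤ 2 * (Γ + 1) * #(avoidSet A S) := by nlinarith
  refine Nat.le_of_mul_le_mul_left ?_ (by positivity : 0 < 2 * (Γ + 1))
  calc 2 * (Γ + 1) * (#(A i ∩ avoidSet A S) * (2 * (Γ + 1)))
      = (Γ + 1) * (#(A i ∩ avoidSet A S) * (4 * (Γ + 1))) := by ring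
    _ ≤ (Γ + 1) * #(avoidSet A far) := by gcongr; exact (Nat.mul_le_mul_right _ hmono).trans hfar
    _ ≤ (Γ + 2) * #(avoidSet A far) := by gcongr; omega
    _ ≤ 2 * (Γ + 1) * #(avoidSet A S) := hfar_le

lemma avoidSet_nonempty
    (hdeg : ∀ i ∈ H, #{j ∈ H | j ≠ i ∧ adj i j} ≤ Γ)
    (hindep : ∀ i ∈ H, ∀ S ⊆ H, (∀ j ∈ S, j ≠ i ∧ ¬adj i j) →
      #(A i ∩ avoidSet A S) * Fintype.card Ω = #(A i) * #(avoidSet A S))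
    (hprob : ∀ i ∈ H, #(A i) * (4 * (Γ + 1)) ≤ Fintype.card Ω) :
    (avoidSet A H).Nonempty := by
  suffices ∀ S ⊆ H, 0 < #(avoidSet A S) from card_pos.1 (this H Subset.rfl)
  intro S
  induction S using Finset.induction_on with
  | empty => simpa using Fintype.card_pos
  | insert a S haS ih =>
    intro hSH
    have hS := ih ((subset_insert a S).trans hSH)
    have ha := card_inter_avoidSet_mul_le hdeg hindep hprob ((subset_insert a S).trans hSH)
      (hSH (mem_insert_self a S)) haS
    have hsplit := card_sdiff_add_card_inter (avoidSet A S) (A a)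
    rw [inter_comm] at hsplit
    rw [avoidSet_insert]
    nlinarith

end LocalLemma

lemma Real.exp_natCast_le_four_pow (m : ℕ) : Real.exp m ≤ 4 ^ m := by
  rw [← Real.exp_one_pow]
  gcongr
  exact Real.exp_one_lt_d9.le.trans (by norm_num)

lemma pow_self_le_four_pow_mul_factorial (m : ℕ) : m ^ m ≤ 4 ^ m * m ! := by
  have h := Real.pow_div_factorial_le_exp (m : ℝ) (Nat.cast_nonneg m) m
  rw [div_le_iff₀ (by positivity)] at h
  exact_mod_cast (h.trans (by gcongr; exact Real.exp_natCast_le_four_pow m) :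
    (m : ℝ) ^ m ≤ 4 ^ m * m !)

lemma choose_mul_pow_mul_four_pow_le {N m d : ℕ} (hmd : m ≤ d) (hN : 64 * m ≤ N) :
    N.choose m * m ^ (m + d) * 4 ^ (m + d) ≤ N ^ (m + d) := by
  have hchoose : N.choose m * m ! ≤ N ^ m := by
    rw [mul_comm, ← Nat.descFactorial_eq_factorial_mul_choose]
    exact Nat.descFactorial_le_pow N m
  refine Nat.le_of_mul_le_mul_right ?_ (factorial_pos m)
  calc N.choose m * m ^ (m + d) * 4 ^ (m + d) * m !
      = N.choose m * m ! * m ^ m * (m ^ d * 4 ^ (m + d)) := by ring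
    _ ≤ N ^ m * (4 ^ m * m !) * (m ^ d * 4 ^ (m + d)) := by
        gcongr
        exact pow_self_le_four_pow_mul_factorial m
    _ = N ^ m * m ! * (m ^ d * 4 ^ (2 * m + d)) := by ring
    _ ≤ N ^ m * m ! * (m ^ d * 4 ^ (3 * d)) := by gcongr <;> omega
    _ = N ^ m * m ! * (64 * m) ^ d := by rw [pow_mul]; ring
    _ ≤ N ^ m * m ! * N ^ d := by gcongr
    _ = N ^ (m + d) * m ! := by ring

lemma four_mul_succ_le_four_pow {Γ r : ℕ} (hr : 1 ≤ r) (hlog : Real.log (16 * Γ) ≤ r) :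
    4 * (Γ + 1) ≤ 4 ^ r := by
  rcases Nat.eq_zero_or_pos Γ with rfl | hΓ
  · simpa using Nat.pow_le_pow_right (by norm_num) hr
  have hΓ' : (1 : ℝ) ≤ Γ := by exact_mod_cast hΓ
  have : (4 * (Γ + 1) : ℝ) ≤ 4 ^ r :=
    calc (4 * (Γ + 1) : ℝ) ≤ 16 * Γ := by linarith
      _ = Real.exp (Real.log (16 * Γ)) := (Real.exp_log (by positivity)).symm
      _ ≤ Real.exp r := Real.exp_le_exp.2 hlog
      _ ≤ 4 ^ r := Real.exp_natCast_le_four_pow r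
  exact_mod_cast this

def HasUniqueColor {ι α : Type*} (c : ι → α) (s : Finset ι) : Prop :=
  ∃ x ∈ s, ∀ y ∈ s, y ≠ x → c y ≠ c x

instance {ι α : Type*} [DecidableEq ι] [DecidableEq α] (c : ι → α) (s : Finset ι) :
    Decidable (HasUniqueColor c s) :=
  inferInstanceAs (Decidable (∃ x ∈ s, ∀ y ∈ s, y ≠ x → c y ≠ c x))

lemma HasUniqueColor.of_subtype {V α : Type*} {p : V → Prop} [DecidablePred p] {f : V → α}
    {E : Finset V} (hE : ∀ v ∈ E, p v)
    (h : HasUniqueColor (fun x : Subtype p ↦ f x) (E.subtype p)) :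
    HasUniqueColor f E := by
  obtain ⟨x, hx, hunique⟩ := h
  exact ⟨x, mem_subtype.1 hx, fun u hu hux ↦
    hunique ⟨u, hE u hu⟩ (mem_subtype.2 hu) fun h ↦ hux (congrArg Subtype.val h)⟩

lemma two_mul_card_image_le_of_not_hasUniqueColor {ι α : Type*} [DecidableEq α] {c : ι → α}
    {s : Finset ι} (h : ¬HasUniqueColor c s) : 2 * #(s.image c) ≤ #s := by
  refine mul_card_image_le_card s 2 fun b hb ↦ ?_
  obtain ⟨x, hx, rfl⟩ := mem_image.1 hb
  simp only [HasUniqueColor, not_exists, not_and, not_forall, not_not] at h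
  obtain ⟨y, hy, hyx, hcy⟩ := h x hx
  exact one_lt_card.2 ⟨x, mem_filter.2 ⟨hx, rfl⟩, y, mem_filter.2 ⟨hy, hcy⟩, hyx.symm⟩

section Colorings

variable {ι α : Type*} [Fintype ι] [DecidableEq ι] [Fintype α] [DecidableEq α]

def conflictingColorings (s : Finset ι) : Finset (ι → α) := {c | ¬HasUniqueColor c s}

lemma mem_conflictingColorings {s : Finset ι} {c : ι → α} :
    c ∈ conflictingColorings s ↔ ¬HasUniqueColor c s := by
  simp [conflictingColorings]

lemma card_filter_forall_mem (s : Finset ι) (T : Finset α) :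
    #{c : ι → α | ∀ x ∈ s, c x ∈ T} =
      #T ^ #s * Fintype.card α ^ (Fintype.card ι - #s) := by
  have : ({c : ι → α | ∀ x ∈ s, c x ∈ T} : Finset (ι → α)) =
      Fintype.piFinset fun x ↦ if x ∈ s then T else univ := by
    ext c
    simp only [mem_filter, mem_univ, true_and, Fintype.mem_piFinset]
    exact ⟨fun h x ↦ by split_ifs with hx <;> simp [h, hx],
      fun h x hx ↦ by simpa [hx] using h x⟩
  rw [this, Fintype.card_piFinset]
  simp only [apply_ite card, prod_ite, prod_const, Finset.card_univ, filter_mem_eq_inter,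
    univ_inter, filter_not, card_univ_sdiff]

lemma card_conflictingColorings_le (s : Finset ι) (hs : #s / 2 ≤ Fintype.card α) :
    #(conflictingColorings s : Finset (ι → α)) ≤ (Fintype.card α).choose (#s / 2) *
      (#s / 2) ^ #s * Fintype.card α ^ (Fintype.card ι - #s) := by
  calc #(conflictingColorings s : Finset (ι → α))
      ≤ #((powersetCard (#s / 2) (univ : Finset α)).biUnion
          fun T ↦ {c : ι → α | ∀ x ∈ s, c x ∈ T}) := by
        refine card_le_card fun c hc ↦ ?_
        have himage := two_mul_card_image_le_of_not_hasUniqueColor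
          (mem_conflictingColorings.1 hc)
        obtain ⟨T, hcT, hT⟩ := exists_superset_card_eq (s := s.image c) (by omega) hs
        exact mem_biUnion.2 ⟨T, mem_powersetCard.2 ⟨subset_univ T, hT⟩,
          mem_filter.2 ⟨mem_univ c, fun x hx ↦ hcT (mem_image_of_mem c hx)⟩⟩
    _ ≤ ∑ T ∈ powersetCard (#s / 2) (univ : Finset α),
          #{c : ι → α | ∀ x ∈ s, c x ∈ T} := card_biUnion_le
    _ = _ := by
        rw [sum_congr rfl fun T hT ↦ by rw [card_filter_forall_mem, (mem_powersetCard.1 hT).2],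
          sum_const, card_powersetCard, Finset.card_univ, smul_eq_mul, mul_assoc]

lemma card_conflictingColorings_mul_four_pow_le (s : Finset ι) (hs : 32 * #s ≤ Fintype.card α) :
    #(conflictingColorings s : Finset (ι → α)) * 4 ^ #s ≤
      Fintype.card α ^ Fintype.card ι := by
  set N := Fintype.card α
  have hsplit : #s = #s / 2 + (#s - #s / 2) := by omega
  calc #(conflictingColorings s : Finset (ι → α)) * 4 ^ #s
      ≤ N.choose (#s / 2) * (#s / 2) ^ #s * N ^ (Fintype.card ι - #s) * 4 ^ #s := by
        gcongr
        exact card_conflictingColorings_le s (by omega)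
    _ = N.choose (#s / 2) * (#s / 2) ^ #s * 4 ^ #s * N ^ (Fintype.card ι - #s) := by ring
    _ ≤ N ^ #s * N ^ (Fintype.card ι - #s) := by
        gcongr
        have := choose_mul_pow_mul_four_pow_le (N := N) (m := #s / 2) (d := #s - #s / 2)
          (by omega) (by omega)
        rwa [← hsplit] at this
    _ = N ^ Fintype.card ι := by rw [← pow_add, Nat.add_sub_cancel' s.card_le_univ]

lemma card_inter_mul_card_eq_of_dependsOn {s : Finset ι} {A B : Finset (ι → α)}
    (hA : DependsOn (· ∈ A) (s : Set ι)) (hB : DependsOn (· ∈ B) (s : Set ι)ᶜ) :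
    #(A ∩ B) * Fintype.card (ι → α) = #A * #B := by
  rw [← Finset.card_univ, ← card_product, ← card_product]
  -- exchanging the coordinates outside `s` is an involution of pairs of colorings, which maps
  -- `A ×ˢ B` onto `(A ∩ B) ×ˢ univ`
  let swap : (ι → α) × (ι → α) → (ι → α) × (ι → α) :=
    fun p ↦ (s.piecewise p.1 p.2, s.piecewise p.2 p.1)
  have hswap : ∀ p, swap (swap p) = p := fun p ↦ by
    ext i <;> by_cases hi : i ∈ s <;> simp [swap, hi]
  have hA' : ∀ p : (ι → α) × (ι → α), (swap p).1 ∈ A ↔ p.1 ∈ A := fun p ↦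
    iff_of_eq (hA fun i hi ↦ s.piecewise_eq_of_mem _ _ hi)
  have hB₁ : ∀ p : (ι → α) × (ι → α), (swap p).1 ∈ B ↔ p.2 ∈ B := fun p ↦
    iff_of_eq (hB fun i hi ↦ s.piecewise_eq_of_notMem _ _ hi)
  have hB₂ : ∀ p : (ι → α) × (ι → α), (swap p).2 ∈ B ↔ p.1 ∈ B := fun p ↦
    iff_of_eq (hB fun i hi ↦ s.piecewise_eq_of_notMem _ _ hi)
  refine card_nbij' swap swap (fun p hp ↦ ?_) (fun p hp ↦ ?_) (fun p _ ↦ hswap p)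
    (fun p _ ↦ hswap p)
  · simp only [coe_product, Set.mem_prod, mem_coe, mem_inter, mem_univ, and_true] at hp ⊢
    exact ⟨(hA' p).2 hp.1, (hB₂ p).2 hp.2⟩
  · simp only [coe_product, Set.mem_prod, mem_coe, mem_inter, mem_univ, and_true] at hp ⊢
    exact ⟨(hA' p).2 hp.1, (hB₁ p).2 hp.2⟩

lemma dependsOn_mem_conflictingColorings (s : Finset ι) :
    DependsOn (· ∈ (conflictingColorings s : Finset (ι → α))) (s : Set ι) :=
    fun c c' h ↦ by
  simp only [mem_conflictingColorings, HasUniqueColor]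
  exact propext <| not_congr <| exists_congr fun x ↦ and_congr_right fun hx ↦
    forall₂_congr fun y hy ↦ by rw [h x (mem_coe.2 hx), h y (mem_coe.2 hy)]

lemma dependsOn_mem_avoidSet {κ : Type*} {A : κ → Finset (ι → α)} {S : Finset κ}
    {t : Set ι} (h : ∀ j ∈ S, DependsOn (· ∈ A j) t) : DependsOn (· ∈ avoidSet A S) t :=
    fun c c' hcc' ↦ by
  simp only [mem_avoidSet]
  exact propext <| forall₂_congr fun j hj ↦ not_congr (iff_of_eq (h j hj hcc'))

lemma card_conflictingColorings_inter_avoidSet {κ : Type*} (s : Finset ι) (t : κ → Finset ι)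
    {S : Finset κ} (hdisj : ∀ j ∈ S, Disjoint (t j) s) :
    #((conflictingColorings s : Finset (ι → α)) ∩
        avoidSet (fun j ↦ conflictingColorings (t j)) S) * Fintype.card (ι → α) =
      #(conflictingColorings s : Finset (ι → α)) *
        #(avoidSet (fun j ↦ (conflictingColorings (t j) : Finset (ι → α))) S) :=
  card_inter_mul_card_eq_of_dependsOn (dependsOn_mem_conflictingColorings s)
    (dependsOn_mem_avoidSet fun j hj ↦ (dependsOn_mem_conflictingColorings (t j)).mono
      (Set.subset_compl_iff_disjoint_right.2 (disjoint_coe.2 (hdisj j hj))))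

theorem exists_forall_hasUniqueColor [Nonempty α] {κ : Type*} [DecidableEq κ] (H : Finset κ)
    (t : κ → Finset ι) (adj : κ → κ → Prop) [DecidableRel adj] (Γ : ℕ)
    (hdeg : ∀ i ∈ H, #{j ∈ H | j ≠ i ∧ adj i j} ≤ Γ)
    (hdisj : ∀ i ∈ H, ∀ j ∈ H, j ≠ i → ¬adj i j → Disjoint (t j) (t i))
    (hsize : ∀ i ∈ H, 4 * (Γ + 1) ≤ 4 ^ #(t i) ∧ 32 * #(t i) ≤ Fintype.card α) :
    ∃ c : ι → α, ∀ i ∈ H, HasUniqueColor c (t i) := by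
  have hprob : ∀ i ∈ H, #(conflictingColorings (t i) : Finset (ι → α)) * (4 * (Γ + 1)) ≤
      Fintype.card (ι → α) := fun i hi ↦
    calc #(conflictingColorings (t i) : Finset (ι → α)) * (4 * (Γ + 1))
        ≤ #(conflictingColorings (t i) : Finset (ι → α)) * 4 ^ #(t i) := by
          gcongr; exact (hsize i hi).1
      _ ≤ Fintype.card α ^ Fintype.card ι :=
          card_conflictingColorings_mul_four_pow_le _ (hsize i hi).2
      _ = Fintype.card (ι → α) := by simp
  obtain ⟨c, hc⟩ := avoidSet_nonempty hdeg (fun i hi S hSH hS ↦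
    card_conflictingColorings_inter_avoidSet (t i) t fun j hj ↦
      hdisj i hi j (hSH hj) (hS j hj).1 (hS j hj).2) hprob
  exact ⟨c, fun i hi ↦ not_not.1 (mem_conflictingColorings.not.1 (mem_avoidSet.1 hc i hi))⟩

end Colorings

/-- Let `H` be a hypergraph in which every hyperedge intersects at most
`Γ` other hyperedges, and every hyperedge `E` satisfies `r ≤ |E| ≤ c·r`, where `c ≥ 1` is
an integer and `r = max(2^12, ⌈136·ln(16Γ)⌉)`. Then `H` has a conflict-free coloring
using at most `32·c·r` colors, i.e. `χ_CF(H) ≤ 32cr`. -/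
theorem hypergraph_cf_coloring {V : Type} [DecidableEq V] (H : Finset (Finset V))
    (Γ c r : ℕ) (hc : 1 ≤ c)
    (hr : r = max (2 ^ 12) ⌈(136 : ℝ) * Real.log (16 * (Γ : ℝ))⌉₊)
    (hΓ : ∀ E ∈ H, (H.filter fun F => F ≠ E ∧ (F ∩ E).Nonempty).card ≤ Γ)
    (hsize : ∀ E ∈ H, r ≤ E.card ∧ E.card ≤ c * r) :
    ∃ f : V → Fin (32 * c * r), IsCFHypergraphColoring H f := by
  have hlog : Real.log (16 * Γ) ≤ r := by
    rcases le_or_gt (Real.log (16 * Γ)) 0 with hneg | hpos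
    · exact hneg.trans (Nat.cast_nonneg r)
    calc Real.log (16 * Γ) ≤ 136 * Real.log (16 * Γ) := by linarith
      _ ≤ r := hr ▸ (Nat.le_ceil _).trans (by exact_mod_cast le_max_right _ _)
  have hr1 : 1 ≤ r := hr ▸ le_max_of_le_left (by norm_num)
  have hΓr := four_mul_succ_le_four_pow hr1 hlog
  have : NeZero (32 * c * r) := ⟨(Nat.mul_pos (Nat.mul_pos (by norm_num) hc) hr1).ne'⟩
  -- `V` may be infinite: colour the vertices covered by `H` and extend by `0`
  set U := H.biUnion id
  have hEU : ∀ E ∈ H, ∀ v ∈ E, v ∈ U := fun E hE v hv ↦ mem_biUnion.2 ⟨E, hE, hv⟩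
  have hcard : ∀ E ∈ H, #(E.subtype (· ∈ U)) = #E := fun E hE ↦ by
    rw [card_subtype, filter_true_of_mem (hEU E hE)]
  obtain ⟨ω, hω⟩ := exists_forall_hasUniqueColor (α := Fin (32 * c * r)) H
    (fun E ↦ E.subtype (· ∈ U)) (fun E F ↦ (F ∩ E).Nonempty) Γ hΓ
    (fun E _ F _ _ hEF ↦ disjoint_left.2 fun x hxF hxE ↦
      hEF ⟨x, mem_inter.2 ⟨mem_subtype.1 hxF, mem_subtype.1 hxE⟩⟩)
    (fun E hE ↦ by
      rw [hcard E hE, Fintype.card_fin, mul_assoc]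
      exact ⟨hΓr.trans (Nat.pow_le_pow_right (by norm_num) (hsize E hE).1),
        Nat.mul_le_mul_left 32 (hsize E hE).2⟩)
  refine ⟨fun v ↦ if hv : v ∈ U then ω ⟨v, hv⟩ else 0, fun E hE ↦ ?_⟩
  exact HasUniqueColor.of_subtype (hEU E hE) (by simpa using hω E hE)
end

section
/- Let G be a graph whose vertex set is partitioned as V(G) = X ⊎ Y with X, Y nonempty, such that (i) every vertex of G has at most d_X neighbors in X, (ii) every vertex of Y has at least one neighbor in X, and (iii) every vertex of X has at most d_Y neighbors in Y. Then there is a coloring of the vertices of X using at most d_X·d_Y + d_X − d_Y + 1 colors such that every vertex in Y sees some color exactly once among its neighbors in X (i.e., for every y ∈ Y there is a color assigned to exactly one vertex of N_G(y) ∩ X). -/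
/-!
Colour `X` properly in the graph in which two vertices of `X` are adjacent when they have a
common neighbour in `Y`. Then the neighbours in `X` of any `y ∈ Y` receive pairwise distinct
colours, so each of them carries a colour that `y` sees exactly once. A vertex `x ∈ X` has at
most `dY` neighbours in `Y`, each contributing at most `dX - 1` further vertices of `X`, so the
greedy colouring needs only `dY * (dX - 1) + 1 ≤ dX * dY + dX - dY + 1` colours.
-/

open Finset

namespace SimpleGraph

variable {V : Type*} (G : SimpleGraph V)

def commonNeighborGraph (X Y : Finset V) : SimpleGraph V where
  Adj u v := u ≠ v ∧ u ∈ X ∧ v ∈ X ∧ ∃ y ∈ Y, G.Adj y u ∧ G.Adj y v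
  symm := ⟨fun _ _ ⟨hne, hu, hv, y, hy, hyu, hyv⟩ => ⟨hne.symm, hv, hu, y, hy, hyv, hyu⟩⟩
  loopless := ⟨fun _ h => h.1 rfl⟩

variable [Fintype V] [DecidableEq V] [DecidableRel G.Adj]

theorem exists_partial_coloring_of_degree_lt {n : ℕ} (hdeg : ∀ v, G.degree v < n)
    (s : Finset V) : ∃ c : V → Fin n, ∀ u ∈ s, ∀ v ∈ s, G.Adj u v → c u ≠ c v := by
  induction s using Finset.induction_on with
  | empty => exact ⟨fun v => ⟨0, (Nat.zero_le _).trans_lt (hdeg v)⟩, by simp⟩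
  | insert a s ha ih =>
    obtain ⟨c, hc⟩ := ih
    have hfree : ((s.filter (G.Adj a)).image c)ᶜ.Nonempty := by
      rw [← card_pos, card_compl, Fintype.card_fin, Nat.sub_pos_iff_lt]
      calc #((s.filter (G.Adj a)).image c) ≤ #(s.filter (G.Adj a)) := card_image_le
        _ ≤ G.degree a := by
          rw [← card_neighborFinset_eq_degree]
          exact card_le_card fun u hu => by simpa using (mem_filter.mp hu).2
        _ < n := hdeg a
    obtain ⟨b, hb⟩ := hfree
    have hb_ne : ∀ v ∈ s, G.Adj a v → b ≠ c v := fun v hv hav hbv =>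
      mem_compl.mp hb (mem_image.mpr ⟨v, mem_filter.mpr ⟨hv, hav⟩, hbv.symm⟩)
    refine ⟨Function.update c a b, ?_⟩
    have hne : ∀ v ∈ s, v ≠ a := fun v hv h => ha (h ▸ hv)
    intro u hu v hv huv
    rcases mem_insert.mp hu with rfl | hus <;> rcases mem_insert.mp hv with rfl | hvs
    · exact (G.irrefl huv).elim
    · simpa [hne v hvs] using hb_ne v hvs huv
    · simpa [hne u hus] using (hb_ne u hus huv.symm).symm
    · simpa [hne u hus, hne v hvs] using hc u hus v hvs huv

theorem colorable_of_degree_lt {n : ℕ} (hdeg : ∀ v, G.degree v < n) : G.Colorable n := by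
  obtain ⟨c, hc⟩ := G.exists_partial_coloring_of_degree_lt hdeg univ
  exact ⟨Coloring.mk c fun h => hc _ (mem_univ _) _ (mem_univ _) h⟩

theorem degree_commonNeighborGraph_le {X Y : Finset V} {dX dY : ℕ}
    (hX : ∀ y ∈ Y, #(G.neighborFinset y ∩ X) ≤ dX) (hY : ∀ x ∈ X, #(G.neighborFinset x ∩ Y) ≤ dY)
    [DecidableRel (G.commonNeighborGraph X Y).Adj] (v : V) :
    (G.commonNeighborGraph X Y).degree v ≤ dY * (dX - 1) := by
  rw [← card_neighborFinset_eq_degree]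
  by_cases hv : v ∉ X
  · have hempty : (G.commonNeighborGraph X Y).neighborFinset v = ∅ :=
      eq_empty_of_forall_notMem fun u hu =>
        hv (((G.commonNeighborGraph X Y).mem_neighborFinset v u).mp hu).2.1
    simp [hempty]
  rw [not_not] at hv
  have hsub : (G.commonNeighborGraph X Y).neighborFinset v ⊆
      (G.neighborFinset v ∩ Y).biUnion fun y => (G.neighborFinset y ∩ X).erase v := by
    intro u hu
    obtain ⟨hne, -, hu, y, hy, hyv, hyu⟩ := (mem_neighborFinset _ _ _).mp hu
    exact mem_biUnion.mpr ⟨y, by simp [hyv.symm, hy], by simp [hne.symm, hyu, hu]⟩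
  have herase : ∀ y ∈ G.neighborFinset v ∩ Y, #((G.neighborFinset y ∩ X).erase v) ≤ dX - 1 := by
    intro y hy
    have hvy : v ∈ G.neighborFinset y ∩ X := by simp_all [adj_comm]
    rw [card_erase_of_mem hvy]
    exact Nat.sub_le_sub_right (hX y (mem_inter.mp hy).2) 1
  calc #((G.commonNeighborGraph X Y).neighborFinset v)
      ≤ #((G.neighborFinset v ∩ Y).biUnion fun y => (G.neighborFinset y ∩ X).erase v) :=
        card_le_card hsub
    _ ≤ #(G.neighborFinset v ∩ Y) * (dX - 1) := card_biUnion_le_card_mul _ _ _ herase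
    _ ≤ dY * (dX - 1) := Nat.mul_le_mul_right _ (hY v hv)

theorem card_filter_neighborFinset_inter_color_eq_one {X Y : Finset V} {α : Type*}
    [DecidableEq α] (c : (G.commonNeighborGraph X Y).Coloring α) {x y : V} (hy : y ∈ Y) (hx : x ∈ X)
    (hyx : G.Adj y x) : #((G.neighborFinset y ∩ X).filter fun u => c u = c x) = 1 := by
  rw [card_eq_one]
  refine ⟨x, eq_singleton_iff_unique_mem.mpr ⟨by simp [hyx, hx], fun u hu => ?_⟩⟩
  simp only [mem_filter, mem_inter, mem_neighborFinset] at hu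
  obtain ⟨⟨hyu, hu⟩, hcu⟩ := hu
  by_contra hne
  exact c.valid ⟨hne, hu, hx, y, hy, hyu, hyx⟩ hcu

end SimpleGraph

theorem coloring_X_seen_once_from_Y_general {V : Type} [Fintype V] [DecidableEq V]
    (G : SimpleGraph V) [DecidableRel G.Adj] (X Y : Finset V) (dX dY : ℕ)
    (h1 : ∀ v : V, (G.neighborFinset v ∩ X).card ≤ dX)
    (h2 : ∀ y ∈ Y, ∃ x ∈ X, G.Adj y x)
    (h3 : ∀ x ∈ X, (G.neighborFinset x ∩ Y).card ≤ dY) :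
    ∃ c : V → Fin (dX * dY + dX - dY + 1),
      ∀ y ∈ Y, ∃ a, ((G.neighborFinset y ∩ X).filter fun u => c u = a).card = 1 := by
  classical
  have hcolors : dY * (dX - 1) < dX * dY + dX - dY + 1 := by
    rw [Nat.mul_sub_one, mul_comm]
    omega
  obtain ⟨c⟩ := (G.commonNeighborGraph X Y).colorable_of_degree_lt fun v =>
    (G.degree_commonNeighborGraph_le (fun y _ => h1 y) h3 v).trans_lt hcolors
  refine ⟨c, fun y hy => ?_⟩
  obtain ⟨x, hx, hyx⟩ := h2 y hy
  exact ⟨c x, G.card_filter_neighborFinset_inter_color_eq_one c hy hx hyx⟩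

/-- Let `G` be a graph with `V(G) = X ⊎ Y`, `X, Y` nonempty, such that
every vertex of `G` has at most `dX` neighbors in `X`, every vertex of `Y` has at least
one neighbor in `X`, and every vertex of `X` has at most `dY` neighbors in `Y`. Then the
vertices of `X` can be colored with `dX·dY + dX − dY + 1` colors so that every vertex of
`Y` sees some color exactly once among its neighbors in `X`. -/
theorem coloring_X_seen_once_from_Y {V : Type} [Fintype V] [DecidableEq V]
    (G : SimpleGraph V) [DecidableRel G.Adj] (X Y : Finset V) (dX dY : ℕ)
    (hpart : X ∪ Y = Finset.univ) (hdisj : Disjoint X Y)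
    (hX : X.Nonempty) (hY : Y.Nonempty)
    (h1 : ∀ v : V, (G.neighborFinset v ∩ X).card ≤ dX)
    (h2 : ∀ y ∈ Y, ∃ x ∈ X, G.Adj y x)
    (h3 : ∀ x ∈ X, (G.neighborFinset x ∩ Y).card ≤ dY) :
    ∃ c : V → Fin (dX * dY + dX - dY + 1),
      ∀ y ∈ Y, ∃ a, ((G.neighborFinset y ∩ X).filter fun u => c u = a).card = 1 :=
  coloring_X_seen_once_from_Y_general G X Y dX dY h1 h2 h3
end

section
/- Let G be a graph whose vertex set is partitioned as V(G) = X ⊎ Y with X, Y nonempty, such that (i) every vertex of Y has at most t_X neighbors in X, and (ii) every vertex of X has at least one neighbor in Y. Then there is a coloring of the vertices of Y using at most t_X + 1 colors such that every vertex in X sees some color exactly once among its neighbors in Y (i.e., for every x ∈ X there is a color assigned to exactly one vertex of N_G(x) ∩ Y). -/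
/-!
Order the vertices linearly and let each `x ∈ X` be served by its least neighbour `r x` in `Y`.
It suffices that `r x` gets a colour no other neighbour of `x` in `Y` has. For `v ∈ Y` this forbids
the colours of the vertices `r x < v` with `x ∈ N(v) ∩ X`, at most `tX` of them, so colouring `Y`
greedily in increasing order with `tX + 1` colours works.
-/

open Finset

theorem Finset.exists_coloring_of_card_lt_rel_le {α : Type*} [LinearOrder α]
    (R : α → α → Prop) [DecidableRel R] (k : ℕ) (s : Finset α)
    (hs : ∀ v ∈ s, #{u ∈ s | u < v ∧ R u v} ≤ k) :
    ∃ c : α → Fin (k + 1), ∀ v ∈ s, ∀ u ∈ s, u < v → R u v → c u ≠ c v := by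
  induction s using Finset.induction_on_max with
  | empty => exact ⟨fun _ => 0, by simp⟩
  | insert a t hlt ih =>
    have ht : ∀ v ∈ t, #{u ∈ t | u < v ∧ R u v} ≤ k := fun v hv =>
      (card_le_card (filter_subset_filter _ (subset_insert a t))).trans (hs v (mem_insert_of_mem hv))
    obtain ⟨c, hc⟩ := ih ht
    have hfew : #(image c {u ∈ t | u < a ∧ R u a}) < #(univ : Finset (Fin (k + 1))) := by
      calc #(image c {u ∈ t | u < a ∧ R u a})
          ≤ #{u ∈ insert a t | u < a ∧ R u a} :=
            card_image_le.trans (card_le_card (filter_subset_filter _ (subset_insert a t)))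
        _ ≤ k := hs a (mem_insert_self a t)
        _ < #(univ : Finset (Fin (k + 1))) := by simp
    obtain ⟨col, -, hcol⟩ := exists_mem_notMem_of_card_lt_card hfew
    refine ⟨Function.update c a col, fun v hv u hu huv hR => ?_⟩
    have hua : u ≠ a := by
      rintro rfl
      rcases mem_insert.1 hv with rfl | hv
      · exact lt_irrefl _ huv
      · exact lt_asymm huv (hlt v hv)
    have hut : u ∈ t := (mem_insert.1 hu).resolve_left hua
    rw [Function.update_of_ne hua]
    rcases mem_insert.1 hv with rfl | hv
    · rw [Function.update_self]
      rintro rfl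
      exact hcol (mem_image_of_mem c (mem_filter.2 ⟨hut, huv, hR⟩))
    · rw [Function.update_of_ne (hlt v hv).ne]
      exact hc v hv u hut huv hR

theorem Finset.card_filter_exists_min_eq_le {ι α : Type*} [LinearOrder α] (t : Finset α)
    (s : Finset ι) (f : ι → Finset α) [DecidablePred fun u : α => ∃ i ∈ s, (f i).min = u] :
    #(t.filter fun u : α => ∃ i ∈ s, (f i).min = u) ≤ #s :=
  card_le_card_of_forall_subsingleton (fun (u : α) i => (f i).min = (u : WithTop α))
    (fun _ hu => (mem_filter.1 hu).2)
    (fun _ _ _ hu _ hu' => WithTop.coe_injective (hu.2.symm.trans hu'.2))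

theorem coloring_Y_seen_once_from_X_general {V : Type} [Fintype V] [DecidableEq V]
    (G : SimpleGraph V) [DecidableRel G.Adj] (X Y : Finset V) (tX : ℕ)
    (h1 : ∀ y ∈ Y, (G.neighborFinset y ∩ X).card ≤ tX)
    (h2 : ∀ x ∈ X, ∃ y ∈ Y, G.Adj x y) :
    ∃ c : V → Fin (tX + 1),
      ∀ x ∈ X, ∃ a, ((G.neighborFinset x ∩ Y).filter fun u => c u = a).card = 1 := by
  classical
  let : LinearOrder V := LinearOrder.lift' _ (Fintype.equivFin V).injective
  obtain ⟨c, hc⟩ := exists_coloring_of_card_lt_rel_le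
    (fun u v => ∃ x ∈ G.neighborFinset v ∩ X, (G.neighborFinset x ∩ Y).min = (u : WithTop V)) tX Y
    fun v hv => (card_le_card (monotone_filter_right Y fun _ _ => And.right)).trans <|
      (card_filter_exists_min_eq_le Y _ _).trans (h1 v hv)
  refine ⟨c, fun x hx => ?_⟩
  obtain ⟨y, hyY, hxy⟩ := h2 x hx
  obtain ⟨r, hr⟩ := min_of_nonempty ⟨y, mem_inter.2 ⟨(G.mem_neighborFinset x y).2 hxy, hyY⟩⟩
  have hr_mem : r ∈ G.neighborFinset x ∩ Y := mem_of_min hr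
  have hr_unique : ∀ u ∈ G.neighborFinset x ∩ Y, c u = c r → u = r := by
    intro u hu hcu
    obtain ⟨hxu, huY⟩ := mem_inter.1 hu
    by_contra hur
    have hxu' : x ∈ G.neighborFinset u ∩ X :=
      mem_inter.2 ⟨(G.mem_neighborFinset u x).2 ((G.mem_neighborFinset x u).1 hxu).symm, hx⟩
    exact hc u huY r (mem_inter.1 hr_mem).2 ((min_le_of_eq hu hr).lt_of_ne' hur) ⟨x, hxu', hr⟩
      hcu.symm
  refine ⟨c r, card_eq_one.2 ⟨r, eq_singleton_iff_unique_mem.2 ⟨mem_filter.2 ⟨hr_mem, rfl⟩,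
    fun u hu => hr_unique u (mem_filter.1 hu).1 (mem_filter.1 hu).2⟩⟩⟩

/-- Let `G` be a graph with `V(G) = X ⊎ Y`, `X, Y` nonempty, such that
every vertex of `Y` has at most `tX` neighbors in `X`, and every vertex of `X` has at
least one neighbor in `Y`. Then the vertices of `Y` can be colored with at most `tX + 1`
colors so that every vertex of `X` sees some color exactly once among its neighbors
in `Y`. -/
theorem coloring_Y_seen_once_from_X {V : Type} [Fintype V] [DecidableEq V]
    (G : SimpleGraph V) [DecidableRel G.Adj] (X Y : Finset V) (tX : ℕ)
    (hpart : X ∪ Y = Finset.univ) (hdisj : Disjoint X Y)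
    (hX : X.Nonempty) (hY : Y.Nonempty)
    (h1 : ∀ y ∈ Y, (G.neighborFinset y ∩ X).card ≤ tX)
    (h2 : ∀ x ∈ X, ∃ y ∈ Y, G.Adj x y) :
    ∃ c : V → Fin (tX + 1),
      ∀ x ∈ X, ∃ a, ((G.neighborFinset x ∩ Y).filter fun u => c u = a).card = 1 :=
  coloring_Y_seen_once_from_X_general G X Y tX h1 h2
end

section
/- Let Γ ≥ 1 and let c ≥ 1 be an integer, and set r = max(2^12, ⌈136·ln(16Γ)⌉). Let E be a finite set of n elements with r ≤ n ≤ c·r, each assigned a color chosen independently and uniformly at random from a set of 32·c·r colors. Then the probability that every element of E has its color assigned to at least one other element of E (i.e., no color appears exactly once in E) is at most 1/(4Γ). -/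
/-!
A colouring with no colour used exactly once has every non-empty fibre of size at least two,
so it takes at most `m = ⌊n/2⌋` values; hence it maps into one of the `C(N, m)` sets of `m`
colours, and there are at most `C(N, m) m^n` such colourings. Since `C(N, m) ≤ N^m / m!` and
`m^m / m! ≤ e^m`, the probability is at most `e^m (m/N)^(n-m) ≤ (e/64)^m ≤ e^(-m)` once
`N ≥ 64 m` and `n ≥ 2m`, and the choice of `r` makes `e^(-m) ≤ 1/(16Γ)`.
-/

open Finset Real

section Counting

variable {α β : Type*}

theorem two_mul_card_image_le [DecidableEq β] (s : Finset α) (f : α → β)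
    (hf : ∀ i ∈ s, ∃ j ∈ s, j ≠ i ∧ f j = f i) : 2 * #(s.image f) ≤ #s := by
  have fiber_two_le : ∀ b ∈ s.image f, 2 ≤ #{a ∈ s | f a = b} := by
    rintro b hb
    obtain ⟨i, hi, rfl⟩ := mem_image.1 hb
    obtain ⟨j, hj, hji, hfj⟩ := hf i hi
    exact one_lt_card.2 ⟨j, by simp [hj, hfj], i, by simp [hi], hji⟩
  calc 2 * #(s.image f) = ∑ _b ∈ s.image f, 2 := by rw [sum_const, smul_eq_mul, mul_comm]
    _ ≤ ∑ b ∈ s.image f, #{a ∈ s | f a = b} := sum_le_sum fiber_two_le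
    _ = #s := (card_eq_sum_card_image f s).symm

theorem card_filter_card_image_le [Fintype α] [DecidableEq α] [Fintype β] [DecidableEq β] {m : ℕ}
    (hm : m ≤ Fintype.card β) :
    #{f : α → β | #(univ.image f) ≤ m} ≤ (Fintype.card β).choose m * m ^ Fintype.card α := by
  have cover : ({f : α → β | #(univ.image f) ≤ m} : Finset (α → β))
      ⊆ (univ.powersetCard m).biUnion fun S => Fintype.piFinset fun _ : α => S := by
    intro f hf
    obtain ⟨S, hfS, hS⟩ := exists_superset_card_eq (mem_filter.1 hf).2 (by simpa using hm)
    exact mem_biUnion.2 ⟨S, mem_powersetCard.2 ⟨subset_univ S, hS⟩,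
      Fintype.mem_piFinset.2 fun i => hfS (mem_image_of_mem f (mem_univ i))⟩
  calc _ ≤ _ := card_le_card cover
    _ ≤ ∑ S ∈ univ.powersetCard m, #(Fintype.piFinset fun _ : α => S) := card_biUnion_le
    _ = ∑ S ∈ univ.powersetCard m, m ^ Fintype.card α := by
        refine sum_congr rfl fun S hS => ?_
        rw [Fintype.card_piFinset, prod_const, (mem_powersetCard.1 hS).2, card_univ]
    _ = _ := by rw [sum_const, card_powersetCard, card_univ, smul_eq_mul]

end Counting

theorem choose_mul_pow_le_exp_mul {N m n : ℕ} (hmn : m ≤ n) :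
    (N.choose m : ℝ) * m ^ n ≤ exp m * N ^ m * m ^ (n - m) := by
  calc (N.choose m : ℝ) * m ^ n ≤ N ^ m / m.factorial * (m ^ m * m ^ (n - m)) := by
        rw [← pow_add, Nat.add_sub_cancel' hmn]
        gcongr
        exact Nat.choose_le_pow_div m N
    _ = m ^ m / m.factorial * N ^ m * m ^ (n - m) := by ring
    _ ≤ exp m * N ^ m * m ^ (n - m) := by
        gcongr
        exact pow_div_factorial_le_exp _ m.cast_nonneg m

theorem exp_mul_pow_le_exp_neg {q : ℝ} (hq : 0 ≤ q) (hq_exp : q * exp 2 ≤ 1) (m : ℕ) :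
    exp m * q ^ m ≤ exp (-m) := by
  rw [← exp_one_pow, ← mul_pow, show -(m : ℝ) = m * (-1) by ring, exp_nat_mul]
  gcongr
  rwa [exp_neg, ← one_div, le_div_iff₀ (exp_pos 1), mul_right_comm, ← exp_add,
    one_add_one_eq_two, mul_comm]

theorem choose_mul_pow_div_pow_le_exp_neg {N m n : ℕ} (hN : 0 < N) (hmN : 64 * m ≤ N)
    (hmn : 2 * m ≤ n) : (N.choose m : ℝ) * m ^ n / N ^ n ≤ exp (-m) := by
  have hN_pos : (0 : ℝ) < N := Nat.cast_pos.2 hN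
  have ratio_le : (m : ℝ) / N ≤ 1 / 64 := by
    rw [div_le_div_iff₀ hN_pos (by norm_num)]; exact_mod_cast (by omega : m * 64 ≤ 1 * N)
  calc (N.choose m : ℝ) * m ^ n / N ^ n
      ≤ exp m * N ^ m * m ^ (n - m) / (N ^ m * N ^ (n - m)) := by
        rw [← pow_add, Nat.add_sub_cancel' (by omega)]
        exact div_le_div_of_nonneg_right (choose_mul_pow_le_exp_mul (by omega)) (by positivity)
    _ = exp m * (m / N) ^ (n - m) := by rw [div_pow]; field_simp
    _ ≤ exp m * (1 / 64) ^ m := by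
        gcongr
        calc ((m : ℝ) / N) ^ (n - m) ≤ (1 / 64) ^ (n - m) := by gcongr
          _ ≤ (1 / 64) ^ m := pow_le_pow_of_le_one (by norm_num) (by norm_num) (by omega)
    _ ≤ exp (-m) := by
        refine exp_mul_pow_le_exp_neg (by norm_num) ?_ m
        rw [show (2 : ℝ) = 1 + 1 by norm_num, exp_add]
        nlinarith [exp_one_lt_d9, exp_pos 1]

theorem prob_no_unique_color_le_general (Γ : ℝ) (hΓ : 1 ≤ Γ) (c : ℕ) (r n : ℕ)
    (hr : r = max (2 ^ 12) ⌈(136 : ℝ) * Real.log (16 * Γ)⌉₊)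
    (hn1 : r ≤ n) (hn2 : n ≤ c * r) :
    ((univ.filter fun f : Fin n → Fin (32 * c * r) =>
        ∀ i : Fin n, ∃ j : Fin n, j ≠ i ∧ f j = f i).card : ℝ)
      / (((32 * c * r : ℕ) : ℝ) ^ n) ≤ 1 / (4 * Γ) := by
  set N := 32 * c * r
  set m := n / 2
  have hr_ge : 4096 ≤ r := hr ▸ le_max_left _ _
  have hN_ge : 64 * m ≤ N := by
    have := Nat.mul_le_mul_left 32 hn2
    simp only [N, mul_assoc] at this ⊢
    omega
  have image_small : ∀ f : Fin n → Fin N, (∀ i, ∃ j, j ≠ i ∧ f j = f i) →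
      #(univ.image f) ≤ m := fun f hf => by
    have := two_mul_card_image_le univ f (by simpa using hf)
    rw [card_univ, Fintype.card_fin] at this
    omega
  have count_le : (#{f : Fin n → Fin N | ∀ i, ∃ j, j ≠ i ∧ f j = f i} : ℝ)
      ≤ N.choose m * m ^ n := by
    have := (card_le_card (monotone_filter_right univ fun f _ => image_small f)).trans
      (card_filter_card_image_le (α := Fin n) (β := Fin N) (m := m)
        (by rw [Fintype.card_fin]; omega))
    simp only [Fintype.card_fin] at this
    exact_mod_cast this
  have log_le : Real.log (16 * Γ) ≤ m := by
    have h136 : 136 * Real.log (16 * Γ) ≤ r :=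
      (Nat.le_ceil _).trans (by exact_mod_cast hr ▸ le_max_right _ _)
    have h4 : (r : ℝ) ≤ 4 * m := by exact_mod_cast (by omega : r ≤ 4 * m)
    linarith [m.cast_nonneg (α := ℝ)]
  have exp_ge : 4 * Γ ≤ exp m := by
    calc 4 * Γ ≤ 16 * Γ := by linarith
      _ ≤ exp m := (log_le_iff_le_exp (by linarith)).1 log_le
  calc _ ≤ (N.choose m : ℝ) * m ^ n / N ^ n := by gcongr
    _ ≤ exp (-m) := choose_mul_pow_div_pow_le_exp_neg (by omega) hN_ge (by omega)
    _ = 1 / exp m := by rw [exp_neg, one_div]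
    _ ≤ 1 / (4 * Γ) := one_div_le_one_div_of_le (by positivity) exp_ge

/-- Let `Γ ≥ 1`, let `c ≥ 1` be an integer, and set
`r = max(2^12, ⌈136·ln(16Γ)⌉)`. Let `n` elements with `r ≤ n ≤ c·r` each be assigned a
color chosen independently and uniformly at random from `32·c·r` colors (modelled by the
uniform distribution over all functions `Fin n → Fin (32·c·r)`). Then the probability
that no color appears exactly once — i.e., every element's color is also assigned to some
other element — is at most `1/(4Γ)`. -/
theorem prob_no_unique_color_le (Γ : ℝ) (hΓ : 1 ≤ Γ) (c : ℕ) (hc : 1 ≤ c) (r n : ℕ)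
    (hr : r = max (2 ^ 12) ⌈(136 : ℝ) * Real.log (16 * Γ)⌉₊)
    (hn1 : r ≤ n) (hn2 : n ≤ c * r) :
    ((univ.filter fun f : Fin n → Fin (32 * c * r) =>
        ∀ i : Fin n, ∃ j : Fin n, j ≠ i ∧ f j = f i).card : ℝ)
      / (((32 * c * r : ℕ) : ℝ) ^ n) ≤ 1 / (4 * Γ) :=
  prob_no_unique_color_le_general Γ hΓ c r n hr hn1 hn2
end
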